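/- Let 0 < ε ≤ 1/2, let X ⊆ ℝ^d be finite and (k,ε)-irreducible with optimal k-means partition X₁,…,X_k, let 1 ≤ i < k, and let C_i be a set of i centers satisfying the invariant P(i). Let S consist of N = ⌈2¹²·k³/ε²⌉ independent D²-samples from X w.r.t. C_i. Then Pr[ there exists j ∈ J such that S contains no point of Y_j ] ≤ 1/(4k). -/

import Mathlib

open Finset
open scoped BigOperators
open Classical

noncomputable section

/-- Points of `ℝ^d`. -/
abbrev Pt (d : ℕ) := EuclideanSpace ℝ (Fin d)

/-- `Φ(C, X) = Σ_{x ∈ X} min_{c ∈ C} ‖x - c‖²`. -/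
noncomputable def Phi {d : ℕ} (C X : Finset (Pt d)) : ℝ :=
  ∑ x ∈ X, sInf ((fun c => ‖x - c‖ ^ 2) '' (C : Set (Pt d)))

/-- The centroid `μ(X)` of a finite set of points. -/
noncomputable def ctr {d : ℕ} (X : Finset (Pt d)) : Pt d :=
  (X.card : ℝ)⁻¹ • ∑ x ∈ X, x

/-- `Δ₁(X) = Φ({μ(X)}, X)`. -/
noncomputable def Delta1 {d : ℕ} (X : Finset (Pt d)) : ℝ := Phi {ctr X} X

/-- `Δ_k(X)`: the optimal `k`-means cost of `X`. -/
noncomputable def DeltaK {d : ℕ} (k : ℕ) (X : Finset (Pt d)) : ℝ :=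
  sInf ((fun C => Phi C X) '' {C : Finset (Pt d) | C.card = k})

/-- `X₁, …, X_k` is an optimal `k`-means partition of `X`. -/
def IsOptPartition {d : ℕ} (k : ℕ) (X : Finset (Pt d)) (Xs : Fin k → Finset (Pt d)) : Prop :=
  (∀ j, (Xs j).Nonempty) ∧
  (∀ j l, j ≠ l → Disjoint (Xs j) (Xs l)) ∧
  Finset.univ.biUnion Xs = X ∧
  ∑ j, Delta1 (Xs j) = DeltaK k X

/-- `X` is `(k, ε)`-irreducible: `Δ_{k-1}(X) ≥ (1+ε)·Δ_k(X)`. -/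
def KIrreducible {d : ℕ} (k : ℕ) (ε : ℝ) (X : Finset (Pt d)) : Prop :=
  (1 + ε) * DeltaK k X ≤ DeltaK (k - 1) X

/-- The invariant `P(i)`: `Ci` consists of the centers `c r` for `r < i` (clusters reindexed
so that the covered clusters come first), each `c r` is a `(1 + ε/16)`-good center for the
optimal cluster `Xs r`, and `Φ(Ci, X) > 0`. -/
def InvariantP {d k : ℕ} (ε : ℝ) (X : Finset (Pt d)) (Xs : Fin k → Finset (Pt d))
    (i : ℕ) (c : Fin k → Pt d) (Ci : Finset (Pt d)) : Prop :=
  Ci = Finset.image c (Finset.univ.filter (fun r : Fin k => r.val < i)) ∧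
  (∀ r : Fin k, r.val < i → Phi {c r} (Xs r) ≤ (1 + ε / 16) * Delta1 (Xs r)) ∧
  0 < Phi Ci X


/-!
Every cluster `X_j` with `j ≥ i` is far from `C_i`. Irreducibility (merging `X_j` away) gives
`ε Δ₁(X_j) ≤ m_j Φ(C_i,{μ_j})`; it also forces each good centre `c_r` into a ball of radius
`‖μ_r - μ_j‖/4` around `μ_r`, and together with the Voronoi property of an optimal partition
this gives `Φ(C_i,{μ_j}) ≤ 9 Φ(C_i,{y})` for every `y ∈ X_j`. By Markov's inequality at least
half of `X_j` lies in `Y_j`, so for `j ∈ J` the set `Y_j` has `D²`-mass at least `ε²/(256k)`.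
All `N` samples miss it with probability at most `(1 - ε²/(256k))^N ≤ 1/(4k²)`, and a union
bound over `j` finishes.
-/

variable {d : ℕ}

lemma Phi_eq_sum_Phi_singleton (C X : Finset (Pt d)) : Phi C X = ∑ x ∈ X, Phi C {x} := by
  simp [Phi]

lemma Phi_nonneg (C X : Finset (Pt d)) : 0 ≤ Phi C X :=
  sum_nonneg fun _ _ => Real.sInf_nonneg <| by rintro _ ⟨c, -, rfl⟩; positivity

lemma Phi_singleton_left (c : Pt d) (X : Finset (Pt d)) :
    Phi {c} X = ∑ x ∈ X, ‖x - c‖ ^ 2 := by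
  simp [Phi]

lemma Phi_singleton_le {C : Finset (Pt d)} {c : Pt d} (hc : c ∈ C) (x : Pt d) :
    Phi C {x} ≤ ‖x - c‖ ^ 2 := by
  simp only [Phi, sum_singleton]
  exact csInf_le ⟨0, by rintro _ ⟨c', -, rfl⟩; positivity⟩ ⟨c, hc, rfl⟩

lemma exists_Phi_singleton_eq {C : Finset (Pt d)} (hC : C.Nonempty) (x : Pt d) :
    ∃ c ∈ C, Phi C {x} = ‖x - c‖ ^ 2 := by
  obtain ⟨c, hc, hmin⟩ := C.exists_min_image (fun c => ‖x - c‖ ^ 2) hC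
  refine ⟨c, hc, (Phi_singleton_le hc x).antisymm ?_⟩
  simp only [Phi, sum_singleton]
  exact le_csInf (hC.to_set.image _) (by rintro _ ⟨c', hc', rfl⟩; exact hmin c' hc')

lemma Phi_le_Phi_singleton {C : Finset (Pt d)} {c : Pt d} (hc : c ∈ C) (X : Finset (Pt d)) :
    Phi C X ≤ Phi {c} X := by
  rw [Phi_eq_sum_Phi_singleton, Phi_singleton_left]
  exact sum_le_sum fun x _ => Phi_singleton_le hc x

lemma Phi_le_Phi_of_subset {C C' : Finset (Pt d)} (hC : C.Nonempty) (h : C ⊆ C')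
    (X : Finset (Pt d)) : Phi C' X ≤ Phi C X :=
  sum_le_sum fun _ _ => csInf_le_csInf ⟨0, by rintro _ ⟨c, -, rfl⟩; positivity⟩
    (hC.to_set.image _) (Set.image_mono (coe_subset.2 h))

lemma nonempty_of_Phi_pos {C X : Finset (Pt d)} (h : 0 < Phi C X) : C.Nonempty := by
  rcases C.eq_empty_or_nonempty with rfl | hC
  · simp [Phi] at h
  · exact hC

lemma nontrivial_of_Phi_pos {C X : Finset (Pt d)} (h : 0 < Phi C X) : Nontrivial (Pt d) := by
  by_contra hd
  rw [not_nontrivial_iff_subsingleton] at hd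
  refine h.not_ge (sum_nonpos fun x _ => Real.sInf_nonpos ?_)
  rintro _ ⟨c, -, rfl⟩
  simp [Subsingleton.elim x c]

lemma sum_sub_ctr {X : Finset (Pt d)} (hX : X.Nonempty) : ∑ x ∈ X, (x - ctr X) = 0 := by
  rw [sum_sub_distrib, sum_const, ctr, ← Nat.cast_smul_eq_nsmul ℝ, smul_smul,
    mul_inv_cancel₀ (by exact_mod_cast hX.card_pos.ne'), one_smul, sub_self]

lemma Phi_singleton_eq_Delta1_add {X : Finset (Pt d)} (hX : X.Nonempty) (c : Pt d) :
    Phi {c} X = Delta1 X + X.card * ‖ctr X - c‖ ^ 2 := by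
  have hsplit : ∀ x : Pt d, ‖x - c‖ ^ 2 =
      ‖x - ctr X‖ ^ 2 + 2 * inner ℝ (x - ctr X) (ctr X - c) + ‖ctr X - c‖ ^ 2 := fun x => by
    rw [← norm_add_sq_real, sub_add_sub_cancel]
  rw [Delta1, Phi_singleton_left, Phi_singleton_left, sum_congr rfl fun x _ => hsplit x,
    sum_add_distrib, sum_add_distrib, ← mul_sum, ← sum_inner, sum_sub_ctr hX]
  simp

lemma Delta1_nonneg (X : Finset (Pt d)) : 0 ≤ Delta1 X := Phi_nonneg _ _

lemma Phi_le_Delta1_add {C X : Finset (Pt d)} (hX : X.Nonempty) (hC : C.Nonempty) :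
    Phi C X ≤ Delta1 X + X.card * Phi C {ctr X} := by
  obtain ⟨c, hc, hcX⟩ := exists_Phi_singleton_eq hC (ctr X)
  rw [hcX, ← Phi_singleton_eq_Delta1_add hX]
  exact Phi_le_Phi_singleton hc X

lemma DeltaK_le_Phi [Nontrivial (Pt d)] {C : Finset (Pt d)} (hC : C.Nonempty) {n : ℕ}
    (hcard : C.card ≤ n) (X : Finset (Pt d)) : DeltaK n X ≤ Phi C X := by
  have := Module.Free.infinite ℝ (Pt d)
  obtain ⟨C', hCC', hC'⟩ := Infinite.exists_superset_card_eq C n hcard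
  refine le_trans ?_ (Phi_le_Phi_of_subset hC hCC' X)
  refine csInf_le ⟨0, ?_⟩ ⟨C', hC', rfl⟩
  rintro _ ⟨D, -, rfl⟩
  exact Phi_nonneg D X

namespace IsOptPartition

variable {k : ℕ} {X : Finset (Pt d)} {Xs : Fin k → Finset (Pt d)}

lemma subset (hopt : IsOptPartition k X Xs) (j : Fin k) : Xs j ⊆ X := by
  rw [← hopt.2.2.1]
  exact subset_biUnion_of_mem Xs (mem_univ j)

lemma Phi_eq_sum (hopt : IsOptPartition k X Xs) (C : Finset (Pt d)) :
    Phi C X = ∑ l, Phi C (Xs l) := by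
  rw [← hopt.2.2.1, Phi, sum_biUnion fun a _ b _ hab => hopt.2.1 a b hab]
  rfl

lemma Delta1_le_DeltaK (hopt : IsOptPartition k X Xs) (j : Fin k) :
    Delta1 (Xs j) ≤ DeltaK k X := by
  rw [← hopt.2.2.2]
  exact single_le_sum (fun l _ => Delta1_nonneg (Xs l)) (mem_univ j)

lemma Phi_le_DeltaK_add (hopt : IsOptPartition k X Xs) {C : Finset (Pt d)} {b : Fin k → ℝ}
    (h : ∀ l, Phi C (Xs l) ≤ Delta1 (Xs l) + b l) : Phi C X ≤ DeltaK k X + ∑ l, b l := by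
  rw [hopt.Phi_eq_sum, ← hopt.2.2.2, ← sum_add_distrib]
  exact sum_le_sum fun l _ => h l

lemma norm_sub_ctr_le [Nontrivial (Pt d)] (hopt : IsOptPartition k X Xs) {j : Fin k}
    (r : Fin k) {y : Pt d} (hy : y ∈ Xs j) : ‖y - ctr (Xs j)‖ ≤ ‖y - ctr (Xs r)‖ := by
  set C := univ.image fun l => ctr (Xs l)
  have hmem : ∀ l, ctr (Xs l) ∈ C := fun l => mem_image_of_mem _ (mem_univ l)
  -- moving `y` alone to the cluster `r` cannot beat the optimum
  have hcost : ∀ l, Phi C (Xs l) ≤ Delta1 (Xs l) +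
      if l = j then ‖y - ctr (Xs r)‖ ^ 2 - ‖y - ctr (Xs j)‖ ^ 2 else 0 := by
    intro l
    split_ifs with hl
    · subst hl
      rw [Phi_eq_sum_Phi_singleton, Delta1, Phi_singleton_left, ← add_sum_erase _ _ hy,
        ← add_sum_erase _ _ hy]
      have := sum_le_sum fun x (_ : x ∈ (Xs l).erase y) => Phi_singleton_le (hmem l) x
      linarith [Phi_singleton_le (hmem r) y]
    · rw [add_zero]
      exact Phi_le_Phi_singleton (hmem l) (Xs l)
  have := (DeltaK_le_Phi (n := k) ⟨_, hmem j⟩ (card_image_le.trans (by simp)) X).trans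
    (hopt.Phi_le_DeltaK_add hcost)
  simp only [sum_ite_eq', mem_univ, if_true] at this
  exact pow_le_pow_iff_left₀ (norm_nonneg _) (norm_nonneg _) two_ne_zero |>.1 (by linarith)

lemma eps_mul_Delta1_le [Nontrivial (Pt d)] {ε : ℝ} (hopt : IsOptPartition k X Xs)
    (hirr : KIrreducible k ε X) (hε0 : 0 ≤ ε) {j r : Fin k} (hjr : j ≠ r) :
    ε * Delta1 (Xs r) ≤ (Xs r).card * ‖ctr (Xs r) - ctr (Xs j)‖ ^ 2 := by
  set C := (univ.erase r).image fun l => ctr (Xs l)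
  have hmem : ∀ l, l ≠ r → ctr (Xs l) ∈ C := fun l hl =>
    mem_image_of_mem _ (mem_erase.2 ⟨hl, mem_univ l⟩)
  -- merging `X_r` into `X_j` leaves `k - 1` clusters
  have hcost : ∀ l, Phi C (Xs l) ≤ Delta1 (Xs l) +
      if l = r then (Xs r).card * ‖ctr (Xs r) - ctr (Xs j)‖ ^ 2 else 0 := by
    intro l
    split_ifs with hl
    · subst hl
      rw [← Phi_singleton_eq_Delta1_add (hopt.1 l)]
      exact Phi_le_Phi_singleton (hmem j hjr) _
    · rw [add_zero]
      exact Phi_le_Phi_singleton (hmem l hl) (Xs l)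
  have hcard : C.card ≤ k - 1 := card_image_le.trans (by simp)
  have := (DeltaK_le_Phi ⟨_, hmem j hjr⟩ hcard X).trans (hopt.Phi_le_DeltaK_add hcost)
  simp only [sum_ite_eq', mem_univ, if_true] at this
  have hDK : 0 ≤ DeltaK k X := (Delta1_nonneg _).trans (hopt.Delta1_le_DeltaK r)
  nlinarith [hopt.Delta1_le_DeltaK r, hirr.trans this]

lemma four_mul_norm_ctr_sub_le [Nontrivial (Pt d)] {ε : ℝ} (hopt : IsOptPartition k X Xs)
    (hirr : KIrreducible k ε X) (hε0 : 0 ≤ ε) {j r : Fin k} (hjr : j ≠ r) {a : Pt d}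
    (ha : Phi {a} (Xs r) ≤ (1 + ε / 16) * Delta1 (Xs r)) :
    4 * ‖ctr (Xs r) - a‖ ≤ ‖ctr (Xs r) - ctr (Xs j)‖ := by
  have hm : (0 : ℝ) < (Xs r).card := by exact_mod_cast (hopt.1 r).card_pos
  rw [Phi_singleton_eq_Delta1_add (hopt.1 r)] at ha
  have hmerge := hopt.eps_mul_Delta1_le hirr hε0 hjr
  have : (Xs r).card * (4 * ‖ctr (Xs r) - a‖) ^ 2 ≤
      (Xs r).card * ‖ctr (Xs r) - ctr (Xs j)‖ ^ 2 := by linarith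
  exact pow_le_pow_iff_left₀ (by positivity) (norm_nonneg _) two_ne_zero |>.1
    (le_of_mul_le_mul_left this hm)

end IsOptPartition

lemma dist_le_three_mul_dist {α : Type*} [PseudoMetricSpace α] {y a b c : α}
    (hy : dist y a ≤ dist y b) (hc : 4 * dist b c ≤ dist b a) : dist a c ≤ 3 * dist y c := by
  have h₁ := dist_triangle b c a
  have h₂ := dist_triangle y c b
  have h₃ := dist_triangle a y c
  rw [dist_comm c a] at h₁
  rw [dist_comm c b] at h₂
  rw [dist_comm a y] at h₃
  linarith

lemma card_le_two_mul_card_filter_le_twice_mean {ι : Type*} (s : Finset ι) {f : ι → ℝ}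
    (hf : ∀ x ∈ s, 0 ≤ f x) :
    (s.card : ℝ) ≤ 2 * (s.filter fun x => f x ≤ 2 / s.card * ∑ y ∈ s, f y).card := by
  set A := ∑ y ∈ s, f y
  set Z := s.filter fun x => ¬ f x ≤ 2 / s.card * A
  have hsplit : ((s.filter fun x => f x ≤ 2 / s.card * A).card : ℝ) + Z.card = s.card := by
    exact_mod_cast card_filter_add_card_filter_not _
  suffices 2 * (Z.card : ℝ) ≤ s.card by linarith
  rcases Z.eq_empty_or_nonempty with hZ | hZ
  · simp [hZ]
  have hm : (0 : ℝ) < s.card := by exact_mod_cast (hZ.mono (filter_subset _ s)).card_pos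
  have hZA : (Z.card : ℝ) * (2 / s.card * A) < A := calc
    (Z.card : ℝ) * (2 / s.card * A) = ∑ _ ∈ Z, 2 / s.card * A := by simp
    _ < ∑ z ∈ Z, f z := sum_lt_sum_of_nonempty hZ fun z hz => not_le.1 (mem_filter.1 hz).2
    _ ≤ A := sum_le_sum_of_subset_of_nonneg (filter_subset _ s) fun x hx _ => hf x hx
  have hA : 0 < A :=
    lt_of_le_of_lt (mul_nonneg (Nat.cast_nonneg _) (mul_nonneg (by positivity) (sum_nonneg hf)))
      hZA
  have : 2 * Z.card * A < s.card * A := calc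
    2 * Z.card * A = s.card * (Z.card * (2 / s.card * A)) := by field_simp
    _ < s.card * A := mul_lt_mul_of_pos_left hZA hm
  exact (lt_of_mul_lt_mul_right this hA.le).le

section Uncovered

variable {k : ℕ} {ε : ℝ} {X : Finset (Pt d)} {Xs : Fin k → Finset (Pt d)} {i : ℕ}
  {c : Fin k → Pt d} {Ci : Finset (Pt d)}

lemma Phi_singleton_ctr_le (hopt : IsOptPartition k X Xs) (hirr : KIrreducible k ε X)
    (hε0 : 0 ≤ ε) (hinv : InvariantP ε X Xs i c Ci) {j : Fin k} (hij : i ≤ j.val) {y : Pt d}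
    (hy : y ∈ Xs j) : Phi Ci {ctr (Xs j)} ≤ 9 * Phi Ci {y} := by
  obtain ⟨hCi, hgood, hpos⟩ := hinv
  have := nontrivial_of_Phi_pos hpos
  obtain ⟨_, hc', hy'⟩ := exists_Phi_singleton_eq (nonempty_of_Phi_pos hpos) y
  obtain ⟨r, hr, rfl⟩ := mem_image.1 (hCi ▸ hc')
  have hr : r.val < i := (mem_filter.1 hr).2
  have hjr : j ≠ r := by rintro rfl; omega
  have hclose : dist (ctr (Xs j)) (c r) ≤ 3 * dist y (c r) := by
    refine dist_le_three_mul_dist (b := ctr (Xs r)) ?_ ?_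
    · simpa only [dist_eq_norm] using hopt.norm_sub_ctr_le r hy
    · simpa only [dist_eq_norm] using hopt.four_mul_norm_ctr_sub_le hirr hε0 hjr (hgood r hr)
  rw [dist_eq_norm, dist_eq_norm] at hclose
  calc Phi Ci {ctr (Xs j)} ≤ ‖ctr (Xs j) - c r‖ ^ 2 := Phi_singleton_le hc' _
    _ ≤ (3 * ‖y - c r‖) ^ 2 := pow_le_pow_left₀ (norm_nonneg _) hclose 2
    _ = 9 * Phi Ci {y} := by rw [hy']; ring

lemma eps_mul_Delta1_le_card_mul_Phi (hopt : IsOptPartition k X Xs)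
    (hirr : KIrreducible k ε X) (hε0 : 0 ≤ ε) (hinv : InvariantP ε X Xs i c Ci) {j : Fin k}
    (hij : i ≤ j.val) : ε * Delta1 (Xs j) ≤ (Xs j).card * Phi Ci {ctr (Xs j)} := by
  obtain ⟨hCi, hgood, hpos⟩ := hinv
  have := nontrivial_of_Phi_pos hpos
  -- `k - 1` centres: `C_i` together with the centroids of the other uncovered clusters
  set g : Fin k → Pt d := fun l => if l.val < i then c l else ctr (Xs l)
  set C := (univ.erase j).image g
  have hg : ∀ l, l ≠ j → g l ∈ C := fun l hl => mem_image_of_mem _ (mem_erase.2 ⟨hl, mem_univ l⟩)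
  have hCiC : Ci ⊆ C := by
    rw [hCi]
    intro _ hx
    obtain ⟨l, hl, rfl⟩ := mem_image.1 hx
    have hl : l.val < i := (mem_filter.1 hl).2
    have hlj : l ≠ j := by rintro rfl; omega
    simpa [g, hl] using hg l hlj
  have hCi_ne := nonempty_of_Phi_pos hpos
  have hcost : ∀ l, Phi C (Xs l) ≤ Delta1 (Xs l) + ((if l.val < i then ε / 16 * Delta1 (Xs l)
      else 0) + if l = j then (Xs j).card * Phi Ci {ctr (Xs j)} else 0) := by
    intro l
    by_cases hl : l.val < i
    · have hlj : l ≠ j := by rintro rfl; omega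
      rw [if_pos hl, if_neg hlj]
      have := hgood l hl
      have := Phi_le_Phi_singleton (by simpa [g, hl] using hg l hlj) (Xs l)
      linarith
    · rw [if_neg hl, zero_add]
      split_ifs with hlj
      · subst hlj
        exact (Phi_le_Phi_of_subset hCi_ne hCiC _).trans (Phi_le_Delta1_add (hopt.1 l) hCi_ne)
      · rw [add_zero]
        exact Phi_le_Phi_singleton (by simpa [g, hl] using hg l hlj) (Xs l)
  have hcard : C.card ≤ k - 1 := card_image_le.trans (by simp)
  have hcover : ∑ l, (if l.val < i then ε / 16 * Delta1 (Xs l) else 0)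
      ≤ ε / 16 * (DeltaK k X - Delta1 (Xs j)) := by
    rw [← sum_filter, ← mul_sum, ← hopt.2.2.2, ← sum_erase_eq_sub (mem_univ j)]
    refine mul_le_mul_of_nonneg_left (sum_le_sum_of_subset_of_nonneg ?_ ?_) (by positivity)
    · intro l hl
      have hl : l.val < i := (mem_filter.1 hl).2
      exact mem_erase.2 ⟨by rintro rfl; omega, mem_univ l⟩
    · exact fun l _ _ => Delta1_nonneg _
  have := (DeltaK_le_Phi (hCi_ne.mono hCiC) hcard X).trans (hopt.Phi_le_DeltaK_add hcost)
  rw [sum_add_distrib, sum_ite_eq'] at this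
  simp only [mem_univ, if_true] at this
  nlinarith [hopt.Delta1_le_DeltaK j, hirr.trans this]

lemma le_sum_filter_Phi_singleton (hopt : IsOptPartition k X Xs) (hirr : KIrreducible k ε X)
    (hε0 : 0 ≤ ε) (hε : ε ≤ 1 / 2) (hinv : InvariantP ε X Xs i c Ci) {j : Fin k}
    (hij : i ≤ j.val) :
    ε / 32 * Phi Ci (Xs j) ≤ ∑ y ∈ (Xs j).filter
      (fun y => Phi Ci {y} ≤ 2 / (Xs j).card * Phi Ci (Xs j)), Phi Ci {y} := by
  set Y := (Xs j).filter fun y => Phi Ci {y} ≤ 2 / (Xs j).card * Phi Ci (Xs j)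
  set R := Phi Ci {ctr (Xs j)}
  have hmarkov : ((Xs j).card : ℝ) ≤ 2 * Y.card := by
    have := card_le_two_mul_card_filter_le_twice_mean (Xs j) fun y _ => Phi_nonneg Ci {y}
    rwa [← Phi_eq_sum_Phi_singleton] at this
  have hY : Y.card * (R / 9) ≤ ∑ y ∈ Y, Phi Ci {y} := by
    refine le_of_eq_of_le (nsmul_eq_mul _ _).symm (card_nsmul_le_sum Y _ _ fun y hy => ?_)
    have := Phi_singleton_ctr_le hopt hirr hε0 hinv hij (mem_filter.1 hy).1
    linarith
  have hA := mul_le_mul_of_nonneg_left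
    (Phi_le_Delta1_add (hopt.1 j) (nonempty_of_Phi_pos hinv.2.2)) hε0
  have hfar := eps_mul_Delta1_le_card_mul_Phi hopt hirr hε0 hinv hij
  have hR : 0 ≤ R := Phi_nonneg _ _
  nlinarith [mul_le_mul_of_nonneg_right hε (mul_nonneg (Nat.cast_nonneg (Xs j).card) hR),
    mul_le_mul_of_nonneg_right hmarkov hR]

end Uncovered

lemma sum_filter_exists_le {ι α : Type*} [Fintype ι] (s : Finset α) (P : ι → α → Prop)
    [DecidablePred fun a => ∃ i, P i a] [∀ i, DecidablePred (P i)] {w : α → ℝ}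
    (hw : ∀ a ∈ s, 0 ≤ w a) :
    ∑ a ∈ s.filter (fun a => ∃ i, P i a), w a ≤ ∑ i, ∑ a ∈ s.filter (P i), w a := by
  simp only [sum_filter]
  rw [sum_comm]
  refine sum_le_sum fun a ha => ?_
  split_ifs with h
  · obtain ⟨i, hi⟩ := h
    refine le_of_eq_of_le (if_pos hi).symm
      (single_le_sum (f := fun i => if P i a then w a else 0) ?_ (mem_univ i))
    exact fun _ _ => by split_ifs <;> simp [hw a ha]
  · exact sum_nonneg fun _ _ => by split_ifs <;> simp [hw a ha]

lemma sum_prod_filter_forall_not_le {α : Type*} [Fintype α] {g : α → ℝ} (hg : ∀ x, 0 ≤ g x)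
    (hg1 : ∑ x, g x = 1) {p : α → Prop} [DecidablePred p] {N : ℕ}
    [DecidablePred fun s : Fin N → α => ∀ t, ¬ p (s t)] {q : ℝ}
    (hq : q ≤ ∑ x ∈ univ.filter p, g x) :
    ∑ s ∈ univ.filter (fun s : Fin N → α => ∀ t, ¬ p (s t)), ∏ t, g (s t) ≤ (1 - q) ^ N := by
  have hcompl : ∑ x ∈ univ.filter (fun x => ¬ p x), g x = 1 - ∑ x ∈ univ.filter p, g x := by
    rw [← hg1, ← sum_filter_add_sum_filter_not univ p g]
    ring
  calc ∑ s ∈ univ.filter (fun s : Fin N → α => ∀ t, ¬ p (s t)), ∏ t, g (s t)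
      = (∑ x ∈ univ.filter (fun x => ¬ p x), g x) ^ N := by
        rw [sum_pow']
        congr 1
        ext s
        simp [Fintype.mem_piFinset]
    _ ≤ (1 - q) ^ N := pow_le_pow_left₀ (sum_nonneg fun x _ => hg x) (by linarith) N

lemma one_sub_pow_le_inv {q : ℝ} (hq0 : 0 ≤ q) (hq1 : q ≤ 1) (N : ℕ) :
    (1 - q) ^ N ≤ (1 + N * q)⁻¹ := calc
  (1 - q) ^ N ≤ Real.exp (-q) ^ N :=
    pow_le_pow_left₀ (by linarith) (Real.one_sub_le_exp_neg q) N
  _ = (Real.exp (N * q))⁻¹ := by rw [← Real.exp_nat_mul, ← Real.exp_neg]; ring_nf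
  _ ≤ (1 + N * q)⁻¹ := inv_anti₀ (by positivity) (by linarith [Real.add_one_le_exp (N * q)])

lemma sum_filter_coe_sort_eq {α : Type*} [DecidableEq α] {s t : Finset α} (hts : t ⊆ s)
    (p : α → Prop) [DecidablePred p] (f : α → ℝ) :
    ∑ x ∈ univ.filter (fun x : s => (x : α) ∈ t ∧ p x), f x = ∑ y ∈ t.filter p, f y := by
  rw [sum_filter, sum_coe_sort s fun y => if y ∈ t ∧ p y then f y else 0, ← sum_filter]
  refine sum_congr ?_ fun _ _ => rfl
  ext y
  simp only [mem_filter]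
  exact ⟨fun h => h.2, fun h => ⟨hts h.1, h⟩⟩

section Sampling

variable {k : ℕ} {ε : ℝ} {X : Finset (Pt d)} {Xs : Fin k → Finset (Pt d)} {i : ℕ}
  {c : Fin k → Pt d} {Ci : Finset (Pt d)}

lemma sum_Phi_singleton_div_Phi {C : Finset (Pt d)} (h : 0 < Phi C X) :
    ∑ x : X, Phi C {(x : Pt d)} / Phi C X = 1 := by
  rw [← sum_div, sum_coe_sort X fun y => Phi C {y}, ← Phi_eq_sum_Phi_singleton, div_self h.ne']

lemma le_sum_filter_Phi_singleton_div_Phi (hopt : IsOptPartition k X Xs)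
    (hirr : KIrreducible k ε X) (hε0 : 0 ≤ ε) (hε : ε ≤ 1 / 2)
    (hinv : InvariantP ε X Xs i c Ci) {j : Fin k} (hij : i ≤ j.val)
    (hJ : ε / (8 * k) * Phi Ci X ≤ Phi Ci (Xs j)) :
    ε ^ 2 / (256 * k) ≤ ∑ x ∈ univ.filter (fun x : X => (x : Pt d) ∈ Xs j ∧
      Phi Ci {(x : Pt d)} ≤ 2 / (Xs j).card * Phi Ci (Xs j)), Phi Ci {(x : Pt d)} / Phi Ci X := by
  rw [← sum_div, sum_filter_coe_sort_eq (hopt.subset j)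
    (fun y => Phi Ci {y} ≤ 2 / (Xs j).card * Phi Ci (Xs j)) fun y => Phi Ci {y},
    le_div_iff₀ hinv.2.2]
  calc ε ^ 2 / (256 * k) * Phi Ci X = ε / 32 * (ε / (8 * k) * Phi Ci X) := by ring
    _ ≤ ε / 32 * Phi Ci (Xs j) := by gcongr
    _ ≤ _ := le_sum_filter_Phi_singleton hopt hirr hε0 hε hinv hij

lemma sum_prod_filter_miss_le (hopt : IsOptPartition k X Xs) (hirr : KIrreducible k ε X)
    (hε0 : 0 ≤ ε) (hε : ε ≤ 1 / 2) (hinv : InvariantP ε X Xs i c Ci) (j : Fin k) (N : ℕ) :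
    ∑ s ∈ univ.filter (fun s : Fin N → X => i ≤ j.val ∧
      ε / (8 * k) * Phi Ci X ≤ Phi Ci (Xs j) ∧ ∀ t, ¬((s t : Pt d) ∈ Xs j ∧
        Phi Ci {(s t : Pt d)} ≤ 2 / (Xs j).card * Phi Ci (Xs j))),
      ∏ t, Phi Ci {(s t : Pt d)} / Phi Ci X ≤ (1 - ε ^ 2 / (256 * k)) ^ N := by
  by_cases hj : i ≤ j.val ∧ ε / (8 * k) * Phi Ci X ≤ Phi Ci (Xs j)
  · simp only [hj.1, hj.2, true_and]
    exact sum_prod_filter_forall_not_le (fun _ => div_nonneg (Phi_nonneg _ _) hinv.2.2.le)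
      (sum_Phi_singleton_div_Phi hinv.2.2)
      (le_sum_filter_Phi_singleton_div_Phi hopt hirr hε0 hε hinv hj.1 hj.2)
  · rw [filter_false_of_mem fun s _ h => hj ⟨h.1, h.2.1⟩, sum_empty]
    have hk : (1 : ℝ) ≤ k := by exact_mod_cast j.pos
    refine pow_nonneg (sub_nonneg.2 ?_) N
    rw [div_le_one (by positivity)]
    nlinarith

end Sampling

lemma natCast_mul_one_sub_pow_le {k N : ℕ} {ε : ℝ} (hε0 : 0 < ε) (hε : ε ≤ 1) (hk : 0 < k)
    (hN : 2 ^ 12 * k ^ 3 / ε ^ 2 ≤ (N : ℝ)) :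
    k * (1 - ε ^ 2 / (256 * k)) ^ N ≤ 1 / (4 * k) := by
  have hk : (1 : ℝ) ≤ k := by exact_mod_cast hk
  have hq1 : ε ^ 2 / (256 * k) ≤ 1 := by
    rw [div_le_one (by positivity)]
    nlinarith
  have hNq : 4 * (k : ℝ) ^ 2 ≤ 1 + N * (ε ^ 2 / (256 * k)) := calc
    4 * (k : ℝ) ^ 2 ≤ 1 + 2 ^ 12 * k ^ 3 / ε ^ 2 * (ε ^ 2 / (256 * k)) := by
      field_simp
      nlinarith
    _ ≤ 1 + N * (ε ^ 2 / (256 * k)) := by gcongr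
  calc k * (1 - ε ^ 2 / (256 * k)) ^ N ≤ k * (4 * (k : ℝ) ^ 2)⁻¹ := by
        gcongr
        exact (one_sub_pow_le_inv (by positivity) hq1 N).trans (inv_anti₀ (by positivity) hNq)
    _ = 1 / (4 * k) := by field_simp

/-- A sample `s : Fin N → X` of `N` independent `D²`-samples has probability
`∏ t, Φ(C_i,{s t}) / Φ(C_i,X)`. -/
theorem stmt_12_general {d k : ℕ} (ε : ℝ) (hε0 : 0 < ε) (hε : ε ≤ 1 / 2)
    (X : Finset (Pt d)) (hirr : KIrreducible k ε X)
    (Xs : Fin k → Finset (Pt d)) (hopt : IsOptPartition k X Xs)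
    (i : ℕ) (hik : i < k)
    (c : Fin k → Pt d) (Ci : Finset (Pt d)) (hinv : InvariantP ε X Xs i c Ci)
    (N : ℕ) (hN : N = ⌈(2 ^ 12 * k ^ 3 : ℝ) / ε ^ 2⌉₊) :
    ∑ s ∈ (Finset.univ : Finset (Fin N → {x // x ∈ X})).filter
        (fun s => ∃ j : Fin k, i ≤ j.val ∧
          (ε / (8 * k)) * Phi Ci X ≤ Phi Ci (Xs j) ∧
          ∀ t : Fin N, ¬((s t : Pt d) ∈ Xs j ∧
            Phi Ci {(s t : Pt d)} ≤ (2 / ((Xs j).card : ℝ)) * Phi Ci (Xs j))),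
      ∏ t : Fin N, (Phi Ci {(s t : Pt d)} / Phi Ci X) ≤
    1 / (4 * k) := by
  have hweight : ∀ s : Fin N → X, 0 ≤ ∏ t, Phi Ci {(s t : Pt d)} / Phi Ci X :=
    fun s => prod_nonneg fun _ _ => div_nonneg (Phi_nonneg _ _) hinv.2.2.le
  calc _ ≤ ∑ j : Fin k, (1 - ε ^ 2 / (256 * k)) ^ N :=
        (sum_filter_exists_le _ _ fun s _ => hweight s).trans
          (sum_le_sum fun j _ => sum_prod_filter_miss_le hopt hirr hε0.le hε hinv j N)
    _ = k * (1 - ε ^ 2 / (256 * k)) ^ N := by simp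
    _ ≤ 1 / (4 * k) := natCast_mul_one_sub_pow_le hε0 (by linarith) (by omega)
        (hN ▸ Nat.le_ceil _)

/-- Under the invariant `P(i)` (clusters reindexed so the covered clusters
are `X₁, …, X_i`), let `S` consist of `N = ⌈2¹²·k³/ε²⌉` independent `D²`-samples from `X`
w.r.t. `C_i` (a sample `s : Fin N → X` has probability `∏_t Φ(C_i,{s t})/Φ(C_i,X)`).
With `J = {j ∈ {i+1,…,k} : Φ(C_i, X_j) ≥ (ε/(8k))·Φ(C_i, X)}` and
`Y_j = {y ∈ X_j : Φ(C_i,{y}) ≤ (2/m_j)·Φ(C_i, X_j)}`, the probability that some `j ∈ J`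
has no point of `Y_j` in `S` is at most `1/(4k)`. -/
theorem stmt_12 {d k : ℕ} (ε : ℝ) (hε0 : 0 < ε) (hε : ε ≤ 1 / 2)
    (X : Finset (Pt d)) (hirr : KIrreducible k ε X)
    (Xs : Fin k → Finset (Pt d)) (hopt : IsOptPartition k X Xs)
    (i : ℕ) (hi : 1 ≤ i) (hik : i < k)
    (c : Fin k → Pt d) (Ci : Finset (Pt d)) (hinv : InvariantP ε X Xs i c Ci)
    (N : ℕ) (hN : N = ⌈(2 ^ 12 * k ^ 3 : ℝ) / ε ^ 2⌉₊) :
    ∑ s ∈ (Finset.univ : Finset (Fin N → {x // x ∈ X})).filter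
        (fun s => ∃ j : Fin k, i ≤ j.val ∧
          (ε / (8 * k)) * Phi Ci X ≤ Phi Ci (Xs j) ∧
          ∀ t : Fin N, ¬((s t : Pt d) ∈ Xs j ∧
            Phi Ci {(s t : Pt d)} ≤ (2 / ((Xs j).card : ℝ)) * Phi Ci (Xs j))),
      ∏ t : Fin N, (Phi Ci {(s t : Pt d)} / Phi Ci X) ≤
    1 / (4 * k) :=
  stmt_12_general ε hε0 hε X hirr Xs hopt i hik c Ci hinv N hN
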